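/- arXiv:1112.0230 — 5 statements merged into one kernel-verified Lean document; each statement's English description precedes it below -/
import Mathlib

section
/- Let k be a field of characteristic p and let ρ: k → GL₂(k) send c to the unipotent matrix [[1,c],[0,1]]. For finite subgroups W, W' of the additive group (k,+), the subgroups ρ(W) and ρ(W') of GL₂(k) are conjugate in GL₂(k) if and only if W' = αW for some α ∈ k*. -/
/-!
If `M ρ(c) M⁻¹ = ρ(c')` with `c ≠ 0`, comparing bottom-right entries of `M ρ(c) = ρ(c') M` forces
`M` to be upper triangular, `M = [[a, b], [0, d]]`, and such an `M` conjugates every `ρ(c)` to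
`ρ((a/d) c)`. So `M ρ(W) M⁻¹ = ρ(αW)` with `α = a/d`, and `ρ` is injective. Conversely
`diag(α, 1)` conjugates `ρ(W)` onto `ρ(αW)`. If `W = 0`, every `M` fixes `ρ(W)`, so `W' = W`.
-/

open Matrix

/-- The unipotent representation `ρ : (k,+) → GL₂(k)`. -/
noncomputable def rho {k : Type*} [Field k] (c : k) : Matrix (Fin 2) (Fin 2) k :=
  !![1, c; 0, 1]

section

variable {k : Type*} [Field k]

lemma rho_injective : Function.Injective (rho (k := k)) := fun a b h => by
  simpa [rho] using congrFun (congrFun h 0) 1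

lemma rho_zero : rho (0 : k) = 1 := by
  rw [rho, one_fin_two]

lemma lowerLeft_eq_zero_of_mul_rho_eq_rho_mul {A : Matrix (Fin 2) (Fin 2) k} {c c' : k}
    (hc : c ≠ 0) (h : A * rho c = rho c' * A) : A 1 0 = 0 := by
  have hprod : A 1 0 * c = 0 := by
    simpa [rho, mul_apply, Fin.sum_univ_two] using congrFun (congrFun h 1) 1
  exact (mul_eq_zero.mp hprod).resolve_right hc

lemma mul_rho_of_lowerLeft_eq_zero {A : Matrix (Fin 2) (Fin 2) k} (h10 : A 1 0 = 0)
    (h11 : A 1 1 ≠ 0) (c : k) : A * rho c = rho (A 0 0 / A 1 1 * c) * A := by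
  ext i j
  fin_cases i <;> fin_cases j <;> simp [rho, mul_apply, Fin.sum_univ_two, h10]
  field_simp
  ring

namespace Matrix.GeneralLinearGroup

lemma diag_mul_ne_zero_of_lowerLeft_eq_zero {M : GL (Fin 2) k}
    (hM : (M : Matrix (Fin 2) (Fin 2) k) 1 0 = 0) :
    (M : Matrix (Fin 2) (Fin 2) k) 0 0 * (M : Matrix (Fin 2) (Fin 2) k) 1 1 ≠ 0 := by
  simpa [det_fin_two, hM] using M.det_ne_zero

end Matrix.GeneralLinearGroup

lemma lowerLeft_eq_zero_of_conj_rho {M : GL (Fin 2) k} {c c' : k} (hc : c ≠ 0)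
    (h : (M : Matrix (Fin 2) (Fin 2) k) * rho c * (M⁻¹ : GL (Fin 2) k) = rho c') :
    (M : Matrix (Fin 2) (Fin 2) k) 1 0 = 0 :=
  lowerLeft_eq_zero_of_mul_rho_eq_rho_mul hc <| by
    rw [← h, Matrix.mul_assoc _ _ (M : Matrix (Fin 2) (Fin 2) k), ← GeneralLinearGroup.coe_mul,
      inv_mul_cancel, GeneralLinearGroup.coe_one, Matrix.mul_one]

lemma conj_rho_of_lowerLeft_eq_zero {M : GL (Fin 2) k}
    (hM : (M : Matrix (Fin 2) (Fin 2) k) 1 0 = 0) (c : k) :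
    (M : Matrix (Fin 2) (Fin 2) k) * rho c * (M⁻¹ : GL (Fin 2) k) =
      rho ((M : Matrix (Fin 2) (Fin 2) k) 0 0 / (M : Matrix (Fin 2) (Fin 2) k) 1 1 * c) := by
  have h11 := right_ne_zero_of_mul (GeneralLinearGroup.diag_mul_ne_zero_of_lowerLeft_eq_zero hM)
  rw [mul_rho_of_lowerLeft_eq_zero hM h11, Matrix.mul_assoc, ← GeneralLinearGroup.coe_mul,
    mul_inv_cancel, GeneralLinearGroup.coe_one, Matrix.mul_one]

lemma conj_image_rho_of_lowerLeft_eq_zero {M : GL (Fin 2) k}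
    (hM : (M : Matrix (Fin 2) (Fin 2) k) 1 0 = 0) (S : Set k) :
    (fun A => (M : Matrix (Fin 2) (Fin 2) k) * A * (M⁻¹ : GL (Fin 2) k)) '' (rho '' S) =
      rho '' ((fun c => (M : Matrix (Fin 2) (Fin 2) k) 0 0 /
        (M : Matrix (Fin 2) (Fin 2) k) 1 1 * c) '' S) := by
  simp only [Set.image_image, conj_rho_of_lowerLeft_eq_zero hM]

lemma conj_image_rho_of_subset_zero (M : GL (Fin 2) k) {S : Set k} (hS : S ⊆ {0}) :
    (fun A => (M : Matrix (Fin 2) (Fin 2) k) * A * (M⁻¹ : GL (Fin 2) k)) '' (rho '' S) =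
      rho '' S := by
  rw [Set.image_image]
  refine Set.EqOn.image_eq fun c hc => ?_
  rw [show c = 0 from hS hc, rho_zero, Matrix.mul_one, ← GeneralLinearGroup.coe_mul,
    mul_inv_cancel, GeneralLinearGroup.coe_one]

theorem exists_mul_image_eq_of_conj_image_rho_eq {S S' : Set k} (M : GL (Fin 2) k)
    (h : (fun A => (M : Matrix (Fin 2) (Fin 2) k) * A * (M⁻¹ : GL (Fin 2) k)) '' (rho '' S) =
      rho '' S') :
    ∃ α : kˣ, (fun c => (α : k) * c) '' S = S' := by
  by_cases hS : S ⊆ {0}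
  · refine ⟨1, ?_⟩
    rw [conj_image_rho_of_subset_zero M hS] at h
    simpa using rho_injective.image_injective h
  obtain ⟨c, hc, hc0⟩ := Set.not_subset.mp hS
  obtain ⟨c', -, hc'⟩ := h.subset ⟨rho c, ⟨c, hc, rfl⟩, rfl⟩
  have hM := lowerLeft_eq_zero_of_conj_rho hc0 hc'.symm
  have hdiag := GeneralLinearGroup.diag_mul_ne_zero_of_lowerLeft_eq_zero hM
  refine ⟨Units.mk0 _ (div_ne_zero (left_ne_zero_of_mul hdiag) (right_ne_zero_of_mul hdiag)), ?_⟩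
  rw [conj_image_rho_of_lowerLeft_eq_zero hM] at h
  exact rho_injective.image_injective h

theorem exists_conj_image_rho_eq_iff (S S' : Set k) :
    (∃ M : GL (Fin 2) k,
        (fun A => (M : Matrix (Fin 2) (Fin 2) k) * A * (M⁻¹ : GL (Fin 2) k)) '' (rho '' S) =
          rho '' S') ↔
      ∃ α : kˣ, (fun c => (α : k) * c) '' S = S' := by
  refine ⟨fun ⟨M, h⟩ => exists_mul_image_eq_of_conj_image_rho_eq M h, fun ⟨α, hα⟩ => ?_⟩
  let D := GeneralLinearGroup.mkOfDetNeZero !![(α : k), 0; 0, 1] (by simp)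
  refine ⟨D, ?_⟩
  rw [conj_image_rho_of_lowerLeft_eq_zero (M := D) (by simp [D]), ← hα]
  simp [D]

end

theorem rho_subgroups_conjugate_iff_general (k : Type*) [Field k]
    (W W' : AddSubgroup k) :
    (∃ M : GL (Fin 2) k,
        (fun A => (M : Matrix (Fin 2) (Fin 2) k) * A * (M⁻¹ : GL (Fin 2) k)) ''
          (rho '' (W : Set k)) = rho '' (W' : Set k)) ↔
      ∃ α : kˣ, (fun c => (α : k) * c) '' (W : Set k) = (W' : Set k) :=
  exists_conj_image_rho_eq_iff (W : Set k) (W' : Set k)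

/-- Two subgroups of `GL₂(k)` of the form `ρ(W)` and `ρ(W')` are conjugate if and only if
`W' = αW` for some `α ∈ k*`. -/
theorem rho_subgroups_conjugate_iff {p : ℕ} [Fact p.Prime] (k : Type*) [Field k] [CharP k p]
    (W W' : AddSubgroup k) (hW : (W : Set k).Finite) (hW' : (W' : Set k).Finite) :
    (∃ M : GL (Fin 2) k,
        (fun A => (M : Matrix (Fin 2) (Fin 2) k) * A * (M⁻¹ : GL (Fin 2) k)) ''
          (rho '' (W : Set k)) = rho '' (W' : Set k)) ↔
      ∃ α : kˣ, (fun c => (α : k) * c) '' (W : Set k) = (W' : Set k) :=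
  rho_subgroups_conjugate_iff_general k W W'
end

section
/- Let k be a field of characteristic p and W a finite subgroup of (k,+) acting on k[x,y] by the rule (x,y)·c = (x, y+cx). Then the ring of invariants k[x,y]^W equals the polynomial subalgebra k[x, N_W(y)], where N_W(y) = ∏_{c∈W}(y+cx). -/
open MvPolynomial

/-- The algebra endomorphism of `k[x,y]` determined by `x ↦ x`, `y ↦ y + c·x`. -/
noncomputable def sigma2 {k : Type*} [CommRing k] (c : k) :
    MvPolynomial (Fin 2) k →ₐ[k] MvPolynomial (Fin 2) k :=
  aeval ![X 0, X 1 + C c * X 0]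

/-!
Writing `k[x,y] = R[y]` with `R = k[x]`, each `c ∈ W` acts as the translation
`y ↦ y + cx` by an element of the finite additive group `Wx ⊆ R`. The norm
`N = ∏_{a ∈ Wx} (y + a)` is monic and translation invariant, so by uniqueness of division
with remainder the quotient and remainder of an invariant `F` by `N` are again invariant.
An invariant of degree `< |W|` is constant, because `F - F(0)` vanishes at the `|W|` points
of `Wx`. Hence the remainder lies in `R`, and induction on the degree gives `F ∈ R[N] = k[x, N]`.
-/

namespace Polynomial

section TranslationNorm

variable {R G : Type*} [CommRing R] [AddGroup G] [Fintype G] (φ : G →+ R)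

noncomputable def translationNorm : R[X] :=
  ∏ g, (X + C (φ g))

theorem monic_translationNorm : (translationNorm φ).Monic :=
  monic_prod_of_monic _ _ fun _ _ ↦ monic_X_add_C _

theorem natDegree_translationNorm [Nontrivial R] :
    (translationNorm φ).natDegree = Fintype.card G := by
  rw [translationNorm, natDegree_prod_of_monic _ _ fun _ _ ↦ monic_X_add_C _]
  simp

theorem taylor_translationNorm (g : G) :
    taylor (φ g) (translationNorm φ) = translationNorm φ := by
  change taylorAlgHom (φ g) (∏ h, _) = _
  rw [map_prod]
  refine Fintype.prod_equiv (Equiv.addLeft g) _ _ fun h ↦ ?_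
  simp [add_assoc]

theorem taylor_divByMonic_and_modByMonic {r : R} {q : R[X]} (hq : q.Monic) (hr : taylor r q = q)
    (p : R[X]) :
    taylor r (p /ₘ q) = taylor r p /ₘ q ∧ taylor r (p %ₘ q) = taylor r p %ₘ q := by
  nontriviality R
  have hdiv : taylor r (p %ₘ q) + q * taylor r (p /ₘ q) = taylor r p := by
    rw [← modByMonic_add_div p q, map_add, taylor_mul, hr, modByMonic_add_div]
  have hdeg : (taylor r (p %ₘ q)).degree < q.degree := by
    rw [degree_taylor]
    exact degree_modByMonic_lt p hq
  obtain ⟨hquot, hrem⟩ := div_modByMonic_unique _ _ hq ⟨hdiv, hdeg⟩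
  exact ⟨hquot.symm, hrem.symm⟩

theorem eq_C_eval_zero_of_taylor_eq [IsDomain R] (hφ : Function.Injective φ) {F : R[X]}
    (hF : F.natDegree < Fintype.card G) (h : ∀ g, taylor (φ g) F = F) :
    F = C (F.eval 0) := by
  refine eq_of_natDegree_lt_card_of_eval_eq _ _ hφ (fun g ↦ ?_) (by simpa using hF)
  calc F.eval (φ g) = (taylor (φ g) F).eval 0 := by rw [taylor_eval, zero_add]
    _ = (C (F.eval 0)).eval (φ g) := by rw [h g, eval_C]

theorem taylor_eq_of_mem_adjoin_translationNorm {F : R[X]}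
    (hF : F ∈ Algebra.adjoin R {translationNorm φ}) (g : G) : taylor (φ g) F = F := by
  have hle : Algebra.adjoin R {translationNorm φ} ≤
      AlgHom.equalizer (taylorAlgHom (φ g)) (AlgHom.id R R[X]) :=
    Algebra.adjoin_le (Set.singleton_subset_iff.2 (taylor_translationNorm φ g))
  exact hle hF

theorem mem_adjoin_translationNorm_of_taylor_eq [IsDomain R] (hφ : Function.Injective φ)
    {F : R[X]} (hF : ∀ g, taylor (φ g) F = F) :
    F ∈ Algebra.adjoin R {translationNorm φ} := by
  induction hn : F.natDegree using Nat.strong_induction_on generalizing F with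
  | _ n ih =>
  have hN := monic_translationNorm φ
  have hdegN := natDegree_translationNorm φ
  have hinv g := taylor_divByMonic_and_modByMonic hN (taylor_translationNorm φ g) F
  by_cases hsmall : F.natDegree < Fintype.card G
  · rw [eq_C_eval_zero_of_taylor_eq φ hφ hsmall hF]
    exact Subalgebra.algebraMap_mem _ _
  have hrem : F %ₘ translationNorm φ = C ((F %ₘ translationNorm φ).eval 0) := by
    refine eq_C_eval_zero_of_taylor_eq φ hφ ?_ fun g ↦ by rw [(hinv g).2, hF g]
    rw [← hdegN]
    refine natDegree_modByMonic_lt F hN fun h ↦ ?_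
    rw [h, natDegree_one] at hdegN
    exact Fintype.card_ne_zero hdegN.symm
  have hquot : F /ₘ translationNorm φ ∈ Algebra.adjoin R {translationNorm φ} := by
    refine ih _ ?_ (fun g ↦ by rw [(hinv g).1, hF g]) rfl
    rw [natDegree_divByMonic F hN, hdegN]
    have := Fintype.card_pos (α := G)
    omega
  rw [← modByMonic_add_div F (translationNorm φ), hrem]
  exact add_mem (Subalgebra.algebraMap_mem _ _) (mul_mem (Algebra.subset_adjoin rfl) hquot)

theorem taylor_eq_iff_mem_adjoin_translationNorm [IsDomain R] (hφ : Function.Injective φ)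
    (F : R[X]) :
    (∀ g, taylor (φ g) F = F) ↔ F ∈ Algebra.adjoin R {translationNorm φ} :=
  ⟨mem_adjoin_translationNorm_of_taylor_eq φ hφ, taylor_eq_of_mem_adjoin_translationNorm φ⟩

end TranslationNorm

end Polynomial

namespace MvPolynomial

variable (k : Type*) [CommRing k]

noncomputable def finTwoEquivPolynomial :
    MvPolynomial (Fin 2) k ≃ₐ[k] Polynomial (MvPolynomial (Fin 1) k) :=
  (renameEquiv k (Equiv.swap 0 1)).trans (finSuccEquiv k 1)

theorem finTwoEquivPolynomial_X_zero : finTwoEquivPolynomial k (X 0) = Polynomial.C (X 0) := by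
  rw [finTwoEquivPolynomial, AlgEquiv.trans_apply, renameEquiv_apply, rename_X,
    Equiv.swap_apply_left]
  exact finSuccEquiv_X_succ (j := 0)

theorem finTwoEquivPolynomial_X_one : finTwoEquivPolynomial k (X 1) = Polynomial.X := by
  simp [finTwoEquivPolynomial, finSuccEquiv_X_zero]

theorem finTwoEquivPolynomial_C (a : k) :
    finTwoEquivPolynomial k (C a) = Polynomial.C (C a) :=
  (finTwoEquivPolynomial k).commutes a

theorem finTwoEquivPolynomial_sigma2 (c : k) (f : MvPolynomial (Fin 2) k) :
    finTwoEquivPolynomial k (sigma2 c f) =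
      Polynomial.taylor (C c * X 0 : MvPolynomial (Fin 1) k) (finTwoEquivPolynomial k f) := by
  suffices (finTwoEquivPolynomial k : _ →ₐ[k] _).comp (sigma2 c) =
      ((Polynomial.taylorAlgHom (C c * X 0 : MvPolynomial (Fin 1) k)).restrictScalars k).comp
        (finTwoEquivPolynomial k : _ →ₐ[k] _) from
    DFunLike.congr_fun this f
  ext i
  fin_cases i <;> simp [sigma2, finTwoEquivPolynomial_X_zero, finTwoEquivPolynomial_X_one,
    finTwoEquivPolynomial_C]

theorem adjoin_insert_C_X_zero (t : Set (Polynomial (MvPolynomial (Fin 1) k))) :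
    Algebra.adjoin k (insert (Polynomial.C (X 0)) t) =
      (Algebra.adjoin (MvPolynomial (Fin 1) k) t).restrictScalars k := by
  have hX : Algebra.adjoin k {(X 0 : MvPolynomial (Fin 1) k)} = ⊤ := by
    rw [← adjoin_range_X, Set.range_unique]
    rfl
  rw [Algebra.adjoin_eq_adjoin_union (hS := hX), Set.image_singleton, Set.singleton_union,
    Polynomial.algebraMap_eq]

end MvPolynomial

theorem invariants_dim_two_general {k : Type*} [Field k]
    (W : AddSubgroup k) [Fintype W] :
    ∀ f : MvPolynomial (Fin 2) k,
      (∀ c : W, sigma2 (c : k) f = f) ↔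
        f ∈ Algebra.adjoin k {(X 0 : MvPolynomial (Fin 2) k),
          ∏ c : W, (X 1 + C (c : k) * X 0)} := by
  intro f
  set e := finTwoEquivPolynomial k
  let φ : W →+ MvPolynomial (Fin 1) k :=
    (AddMonoidHom.mulRight (X 0)).comp ((C : k →+* _).toAddMonoidHom.comp W.subtype)
  have hφ : Function.Injective φ :=
    (mul_left_injective₀ (X_ne_zero 0)).comp ((C_injective _ _).comp Subtype.val_injective)
  have hN : e (∏ c : W, (X 1 + C (c : k) * X 0)) = Polynomial.translationNorm φ := by
    simp [e, φ, Polynomial.translationNorm, finTwoEquivPolynomial_X_zero,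
      finTwoEquivPolynomial_X_one, finTwoEquivPolynomial_C]
  calc (∀ c : W, sigma2 (c : k) f = f) ↔ ∀ c : W, Polynomial.taylor (φ c) (e f) = e f := by
        simp [← e.injective.eq_iff, e, finTwoEquivPolynomial_sigma2, φ]
    _ ↔ e f ∈ Algebra.adjoin _ {Polynomial.translationNorm φ} :=
        Polynomial.taylor_eq_iff_mem_adjoin_translationNorm φ hφ _
    _ ↔ e f ∈ (Algebra.adjoin k {(X 0 : MvPolynomial (Fin 2) k),
          ∏ c : W, (X 1 + C (c : k) * X 0)}).map (e : _ →ₐ[k] _) := by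
        rw [← Algebra.adjoin_image, Set.image_insert_eq, Set.image_singleton,
          AlgEquiv.coe_toAlgHom, hN, finTwoEquivPolynomial_X_zero, adjoin_insert_C_X_zero,
          Subalgebra.mem_restrictScalars]
    _ ↔ _ := e.injective.mem_set_image

/-- For a finite additive subgroup `W ≤ (k,+)` acting on `k[x,y]` by `x ↦ x`, `y ↦ y + cx`,
the ring of invariants `k[x,y]^W` is the subalgebra `k[x, N_W(y)]` where
`N_W(y) = ∏_{c∈W}(y + cx)`. -/
theorem invariants_dim_two {p : ℕ} [Fact p.Prime] {k : Type*} [Field k] [CharP k p]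
    (W : AddSubgroup k) [Fintype W] :
    ∀ f : MvPolynomial (Fin 2) k,
      (∀ c : W, sigma2 (c : k) f = f) ↔
        f ∈ Algebra.adjoin k {(X 0 : MvPolynomial (Fin 2) k),
          ∏ c : W, (X 1 + C (c : k) * X 0)} :=
  invariants_dim_two_general W
end

section
/- Let k be a field of characteristic p > 2, W a finite subgroup of (k,+) of order pʳ acting on k[x,y,z] by x·c = x, y·c = y+cx, z·c = z+2cy+c²x. With δ := y²−xz, N_W(y) := ∏_{c∈W}(y+cx), N_W(z) := ∏_{c∈W}(z+2cy+c²x), and H_W(s,t) ∈ k[s,t] the unique polynomial with H_W(x,y²) = N_W(y)² − y^{2pʳ}, the relation δ^{pʳ} − N_W(y)² + x^{pʳ} N_W(z) + H_W(x,δ) = 0 holds in k[x,y,z]. -/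
open MvPolynomial

/-!
Put `q = |W|`, `a_c = (y + c x)²` for `c ∈ W`, and regard `H(x, T)` as a polynomial in a new
variable `T` over `k[x,y,z]`. Reading `y` as `T` in the defining identity of `H` gives
`H(x, T²) = (∏_c (T + c x))² − T^{2q}`, so `H(x, T)` has degree `< q` in `T`; evaluating at
`T = y + c x` and using `c + W = W` gives `H(x, a_c) = N_W(y)² − a_c^q`. Hence
`T^q + H(x, T) − N_W(y)²` is monic of degree `q` with the `q` roots `a_c`, which are distinct
because `p ≠ 2`, so it equals `∏_c (T − a_c)`. At `T = δ` every factor is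
`δ − a_c = −x (z + 2cy + c²x)`, and `q` is odd.
-/

namespace Polynomial

lemma isMonicOfDegree_prod {R ι : Type*} [CommSemiring R] (s : Finset ι) {f : ι → R[X]}
    {n : ι → ℕ} (h : ∀ i ∈ s, IsMonicOfDegree (f i) (n i)) :
    IsMonicOfDegree (∏ i ∈ s, f i) (∑ i ∈ s, n i) := by
  classical
  induction s using Finset.induction_on with
  | empty => simp
  | insert i s hi ih =>
    rw [Finset.prod_insert hi, Finset.sum_insert hi]
    exact (h i (s.mem_insert_self i)).mul (ih fun j hj ↦ h j (Finset.mem_insert_of_mem hj))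

theorem X_pow_add_eq_prod_X_sub_C {R ι : Type*} [CommRing R] [IsDomain R] [Fintype ι]
    {a : ι → R} (ha : Function.Injective a) {Q : R[X]} (hQ : Q.natDegree < Fintype.card ι)
    (hroot : ∀ i, (X ^ Fintype.card ι + Q).eval (a i) = 0) :
    X ^ Fintype.card ι + Q = ∏ i, (X - C (a i)) := by
  have hP : IsMonicOfDegree (X ^ Fintype.card ι + Q) (Fintype.card ι) :=
    (isMonicOfDegree_X_pow R _).add_right hQ
  have hM : IsMonicOfDegree (∏ i, (X - C (a i))) (Fintype.card ι) := by
    simpa using isMonicOfDegree_prod Finset.univ fun i _ ↦ isMonicOfDegree_X_sub_one (a i)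
  refine sub_eq_zero.mp <| eq_zero_of_natDegree_lt_card_of_eval_eq_zero _ ha (fun i ↦ ?_) <|
    hP.natDegree_sub_lt (by omega) hM
  simp [hroot, eval_prod, Finset.prod_eq_zero (Finset.mem_univ i)]

end Polynomial

lemma prod_sq_sub_mul_sub_sq {R ι : Type*} [CommRing R] [Fintype ι] (hodd : Odd (Fintype.card ι))
    (x y z : R) (f : ι → R) :
    ∏ i, (y ^ 2 - x * z - (y + f i * x) ^ 2)
      = -(x ^ Fintype.card ι * ∏ i, (z + 2 * f i * y + f i ^ 2 * x)) := by
  calc ∏ i, (y ^ 2 - x * z - (y + f i * x) ^ 2)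
      = ∏ i, (-x * (z + 2 * f i * y + f i ^ 2 * x)) := by congr! 1; ring
    _ = _ := by
      rw [Finset.prod_mul_distrib, Finset.prod_const, Finset.card_univ, hodd.neg_pow]
      ring

lemma MvPolynomial.injective_sq_X_add_C_mul_X {k σ : Type*} [Field k] (hk : ringChar k ≠ 2)
    {i j : σ} (hij : i ≠ j) :
    Function.Injective fun c : k ↦ (X i + C c * X j : MvPolynomial σ k) ^ 2 := by
  classical
  intro c c' h
  rcases sq_eq_sq_iff_eq_or_eq_neg.mp h with h | h
  · exact C_injective σ k <| mul_right_cancel₀ (X_ne_zero j) (add_left_cancel h)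
  · have := congrArg (eval (Pi.single i 1)) h
    simp [hij.symm] at this
    exact absurd this (Ring.neg_one_ne_one_of_char_ne_two hk).symm

namespace SymmetricSquare

variable {k : Type*} [CommRing k]

lemma eval_aeval_C_X {S : Type*} [CommRing S] [Algebra k S] (H : MvPolynomial (Fin 2) k)
    (x a : S) :
    (aeval ![Polynomial.C x, Polynomial.X] H).eval a = aeval ![x, a] H := by
  rw [← Polynomial.coe_aeval_eq_eval, ← AlgHom.coe_restrictScalars' k, comp_aeval_apply]
  congr 1
  ext i
  fin_cases i <;> simp

lemma aeval_C_X_comp_X_sq (H : MvPolynomial (Fin 2) k) :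
    (aeval ![Polynomial.C (X 0 : MvPolynomial (Fin 3) k), Polynomial.X] H).comp (Polynomial.X ^ 2)
      = aeval ![Polynomial.C (X 0), Polynomial.X, Polynomial.C (X 2)]
          (aeval ![(X 0 : MvPolynomial (Fin 3) k), X 1 ^ 2] H) := by
  rw [Polynomial.comp_eq_aeval, ← AlgHom.coe_restrictScalars' k, comp_aeval_apply,
    comp_aeval_apply]
  congr 1
  ext i
  fin_cases i <;> simp

variable {ι : Type*} [Fintype ι]

lemma aeval_C_X_comp_X_sq_eq (f : ι → k) (H : MvPolynomial (Fin 2) k)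
    (hH : aeval ![(X 0 : MvPolynomial (Fin 3) k), X 1 ^ 2] H =
      (∏ i, (X 1 + C (f i) * X 0)) ^ 2 - X 1 ^ (2 * Fintype.card ι)) :
    (aeval ![Polynomial.C (X 0 : MvPolynomial (Fin 3) k), Polynomial.X] H).comp (Polynomial.X ^ 2)
      = (∏ i, (Polynomial.X + Polynomial.C (C (f i) * X 0))) ^ 2
          - Polynomial.X ^ (2 * Fintype.card ι) := by
  rw [aeval_C_X_comp_X_sq, hH]
  simp [Polynomial.C_mul]

lemma natDegree_aeval_C_X_lt [IsDomain k] [Nonempty ι] (f : ι → k) (H : MvPolynomial (Fin 2) k)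
    (hH : aeval ![(X 0 : MvPolynomial (Fin 3) k), X 1 ^ 2] H =
      (∏ i, (X 1 + C (f i) * X 0)) ^ 2 - X 1 ^ (2 * Fintype.card ι)) :
    (aeval ![Polynomial.C (X 0 : MvPolynomial (Fin 3) k), Polynomial.X] H).natDegree
      < Fintype.card ι := by
  have hG := Polynomial.isMonicOfDegree_prod Finset.univ fun i _ ↦
    Polynomial.isMonicOfDegree_X_add_one (C (f i) * X 0 : MvPolynomial (Fin 3) k)
  simp only [Finset.sum_const, Finset.card_univ, smul_eq_mul, mul_one] at hG
  have h := (hG.pow 2).natDegree_sub_X_pow (by positivity)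
  rw [mul_comm _ 2, ← aeval_C_X_comp_X_sq_eq f H hH, Polynomial.natDegree_comp,
    Polynomial.natDegree_X_pow] at h
  omega

lemma eval_aeval_C_X_sq_translate (W : AddSubgroup k) [Fintype W] (H : MvPolynomial (Fin 2) k)
    (hH : aeval ![(X 0 : MvPolynomial (Fin 3) k), X 1 ^ 2] H =
      (∏ c : W, (X 1 + C (c : k) * X 0)) ^ 2 - X 1 ^ (2 * Fintype.card W)) (c₀ : W) :
    (aeval ![Polynomial.C (X 0 : MvPolynomial (Fin 3) k), Polynomial.X] H).eval
        ((X 1 + C (c₀ : k) * X 0) ^ 2)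
      = (∏ c : W, (X 1 + C (c : k) * X 0)) ^ 2
          - (X 1 + C (c₀ : k) * X 0) ^ (2 * Fintype.card W) := by
  have h := congrArg (Polynomial.eval (X 1 + C (c₀ : k) * X 0))
    (aeval_C_X_comp_X_sq_eq (fun c : W ↦ (c : k)) H hH)
  simp only [Polynomial.eval_comp, Polynomial.eval_sub, Polynomial.eval_pow, Polynomial.eval_prod,
    Polynomial.eval_add, Polynomial.eval_X, Polynomial.eval_C] at h
  rw [h]
  congr 2
  exact Fintype.prod_equiv (Equiv.addLeft c₀) _ _ fun c ↦ by simp; ring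

end SymmetricSquare

open SymmetricSquare

/-- With `δ = y² − xz`, `N_W(y) = ∏_{c∈W}(y+cx)`, `N_W(z) = ∏_{c∈W}(z+2cy+c²x)` and
`H_W(s,t)` the polynomial satisfying `H_W(x,y²) = N_W(y)² − y^{2pʳ}`, the relation
`δ^{pʳ} − N_W(y)² + x^{pʳ}·N_W(z) + H_W(x,δ) = 0` holds in `k[x,y,z]`. -/
theorem symmetric_square_relation {p : ℕ} [Fact p.Prime] (hp2 : 2 < p)
    {k : Type*} [Field k] [CharP k p]
    (W : AddSubgroup k) [Fintype W] (r : ℕ) (hcard : Fintype.card W = p ^ r)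
    (H : MvPolynomial (Fin 2) k)
    (hH : aeval (R := k) ![(X 0 : MvPolynomial (Fin 3) k), X 1 ^ 2] H =
      (∏ c : W, (X 1 + C (c : k) * X 0)) ^ 2 - X 1 ^ (2 * p ^ r)) :
    (X 1 ^ 2 - X 0 * X 2 : MvPolynomial (Fin 3) k) ^ p ^ r
      - (∏ c : W, (X 1 + C (c : k) * X 0)) ^ 2
      + X 0 ^ p ^ r * ∏ c : W, (X 2 + 2 * C (c : k) * X 1 + C (c : k) ^ 2 * X 0)
      + aeval (R := k) ![(X 0 : MvPolynomial (Fin 3) k), X 1 ^ 2 - X 0 * X 2] H = 0 := by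
  have hchar : ringChar k ≠ 2 := by rw [ringChar.eq k p]; omega
  have hodd : Odd (Fintype.card W) :=
    hcard ▸ (Nat.Prime.odd_of_ne_two Fact.out (by omega)).pow
  rw [← hcard] at hH ⊢
  set F : MvPolynomial (Fin 3) k := ∏ c : W, (X 1 + C (c : k) * X 0)
  set J := aeval ![Polynomial.C (X 0 : MvPolynomial (Fin 3) k), Polynomial.X] H
  have hinj :
      Function.Injective fun c : W ↦ (X 1 + C (c : k) * X 0 : MvPolynomial (Fin 3) k) ^ 2 :=
    (injective_sq_X_add_C_mul_X hchar (by decide : (1 : Fin 3) ≠ 0)).comp Subtype.val_injective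
  have hdeg : (J - Polynomial.C (F ^ 2)).natDegree < Fintype.card W := by
    rw [Polynomial.natDegree_sub_C]
    exact natDegree_aeval_C_X_lt _ H hH
  have hroot (c : W) : (Polynomial.X ^ Fintype.card W + (J - Polynomial.C (F ^ 2))).eval
      ((X 1 + C (c : k) * X 0) ^ 2) = 0 := by
    simp only [Polynomial.eval_add, Polynomial.eval_sub, Polynomial.eval_pow, Polynomial.eval_X,
      Polynomial.eval_C, J, eval_aeval_C_X_sq_translate W H hH c, ← pow_mul]
    ring
  have hδ := congrArg (Polynomial.eval (X 1 ^ 2 - X 0 * X 2))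
    (Polynomial.X_pow_add_eq_prod_X_sub_C hinj hdeg hroot)
  simp only [Polynomial.eval_add, Polynomial.eval_sub, Polynomial.eval_pow, Polynomial.eval_X,
    Polynomial.eval_C, Polynomial.eval_prod, J, eval_aeval_C_X] at hδ
  rw [prod_sq_sub_mul_sub_sq hodd] at hδ
  linear_combination hδ
end

section
/- Let k be a field of characteristic p, G a finite p-group, and V a finite-dimensional representation of G over k with a chosen basis x, y₁, …, y_{n−1} of V* on which G acts by upper-triangular unipotent matrices with x fixed. Let A ⊆ k[V]^G be a graded subalgebra containing x such that A[x⁻¹] = k[V]^G[x⁻¹], the extension A ⊆ k[V]^G is integral, and A has a SAGBI basis B containing x whose other elements have lead monomials (in grevlex with x smallest) lying in k[y₁,…,y_{n−1}]. Then A = k[V]^G. -/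
/-!
Since `A[x⁻¹] = k[V]^G[x⁻¹]`, every invariant `f` has `x ^ k * f ∈ A` for some `k`, so it suffices
to show that `A` is `x`-saturated: `x ^ k * f ∈ A → f ∈ A`. Each lead monomial of `B` is the lead
monomial of `x ^ e * b` with `b ∈ A` and `e` its `x`-exponent (`b = 1` for `x` itself, `e = 0`
otherwise), and this property is multiplicative. By the SAGBI property the lead monomial `D` of
`h = x ^ k * f` is therefore that of `x ^ D₀ * q` with `q ∈ A`, and `k ≤ D₀`. Subtracting the
matching scalar multiple of `x ^ D₀ * q` from `h` stays in `A ∩ x ^ k k[V]` and lowers the grevlex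
degree, so well-founded induction on grevlex concludes.
-/

open MvPolynomial

variable {n : ℕ}

/-- The graded reverse lexicographic order on monomials in `x = X 0 < y₁ = X 1 < ⋯`:
`a < b` iff `deg a < deg b`, or the degrees agree and at the smallest-index variable
where `a` and `b` differ, `a` has the larger exponent. -/
def GrevlexLt (a b : Fin (n + 1) →₀ ℕ) : Prop :=
  (a.sum fun _ e => e) < (b.sum fun _ e => e) ∨
    ((a.sum fun _ e => e) = (b.sum fun _ e => e) ∧
      ∃ i : Fin (n + 1), b i < a i ∧ ∀ j : Fin (n + 1), j < i → a j = b j)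

/-- `d` is the lead monomial of `f` with respect to grevlex. -/
def IsLeadMonomial {k : Type*} [CommSemiring k] (f : MvPolynomial (Fin (n + 1)) k) (d : Fin (n + 1) →₀ ℕ) : Prop :=
  d ∈ f.support ∧ ∀ e ∈ f.support, e ≠ d → GrevlexLt e d

open scoped MonomialOrder

def Grevlex (σ : Type*) := σ →₀ ℕ

section Grevlex

variable {σ : Type*}

noncomputable def grevlexKey (a : σ →₀ ℕ) : ℕ ×ₗ Lex (σ → ℤ) :=
  toLex (a.degree, toLex fun i => -(a i : ℤ))

lemma grevlexKey_injective : Function.Injective (grevlexKey (σ := σ)) := by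
  intro a b h
  ext i
  simpa [grevlexKey] using congrFun (congrArg (fun x => ofLex (ofLex x).2) h) i

lemma grevlexKey_add (a b : σ →₀ ℕ) : grevlexKey (a + b) = grevlexKey a + grevlexKey b := by
  simp only [grevlexKey, map_add, Finsupp.add_apply, Nat.cast_add, neg_add]
  rfl

noncomputable instance : AddCommMonoid (Grevlex σ) := inferInstanceAs (AddCommMonoid (σ →₀ ℕ))

noncomputable def toGrevlex : (σ →₀ ℕ) ≃+ Grevlex σ where
  toEquiv := Equiv.refl _
  map_add' _ _ := rfl

variable [LinearOrder σ] [WellFoundedLT σ]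

noncomputable instance : LinearOrder (Grevlex σ) :=
  LinearOrder.lift' (grevlexKey (σ := σ)) grevlexKey_injective

instance : IsOrderedCancelAddMonoid (Grevlex σ) :=
  Function.Injective.isOrderedCancelAddMonoid (grevlexKey (σ := σ)) grevlexKey_add Iff.rfl

lemma toGrevlex_monotone : Monotone (toGrevlex (σ := σ)) := by
  intro a b hab
  obtain ⟨c, rfl⟩ := exists_add_of_le hab
  rcases eq_or_ne c 0 with rfl | hc
  · simp
  · refine le_of_lt (Prod.Lex.toLex_lt_toLex.mpr (Or.inl ?_))
    change a.degree < (a + c).degree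
    rw [map_add, lt_add_iff_pos_right]
    exact Nat.pos_of_ne_zero ((Finsupp.degree_eq_zero_iff c).not.mpr hc)

-- Dickson's lemma: a linear order refining divisibility of monomials is a well-order.
instance [Finite σ] : WellFoundedLT (Grevlex σ) :=
  wellQuasiOrderedLE_iff_wellFoundedLT.mp
    (toGrevlex_monotone.wellQuasiOrderedLE_of_wellQuasiOrderedLE_of_surjective toGrevlex.surjective)

-- Unlike `MonomialOrder.degLex`, the variables increase along `σ`: `X i ≺ X j` iff `i < j`.
noncomputable def MonomialOrder.grevlex [Finite σ] : MonomialOrder σ where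
  syn := Grevlex σ
  toSyn := toGrevlex
  toSyn_monotone := toGrevlex_monotone

end Grevlex

theorem MonomialOrder.grevlex_lt_iff {a b : Fin (n + 1) →₀ ℕ} :
    a ≺[grevlex] b ↔ GrevlexLt a b := by
  refine Prod.Lex.toLex_lt_toLex.trans (or_congr Iff.rfl (and_congr Iff.rfl ?_))
  change (∃ i, (∀ j, j < i → -(a j : ℤ) = -(b j : ℤ)) ∧ -(a i : ℤ) < -(b i : ℤ)) ↔ _
  simp only [neg_inj, Nat.cast_inj, neg_lt_neg_iff, Nat.cast_lt]
  exact exists_congr fun i => and_comm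

theorem MvPolynomial.support_subset_closure_of_mem_adjoin_monomial {σ R : Type*} [CommSemiring R]
    {s : Set (σ →₀ ℕ)} {p : MvPolynomial σ R}
    (hp : p ∈ Algebra.adjoin R ((monomial · (1 : R)) '' s)) :
    (p.support : Set (σ →₀ ℕ)) ⊆ AddSubmonoid.closure s := by
  classical
  induction hp using Algebra.adjoin_induction with
  | mem q hq =>
    obtain ⟨e, he, rfl⟩ := hq
    exact (Finset.coe_subset.mpr support_monomial_subset).trans
      (by simpa using AddSubmonoid.subset_closure he)
  | algebraMap r =>
    rw [algebraMap_eq, ← monomial_zero']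
    exact (Finset.coe_subset.mpr support_monomial_subset).trans (by simp [zero_mem])
  | add p q _ _ hp hq =>
    exact (Finset.coe_subset.mpr support_add).trans (by push_cast; exact Set.union_subset hp hq)
  | mul p q _ _ hp hq =>
    refine (Finset.coe_subset.mpr (support_mul p q)).trans ?_
    rw [Finset.coe_add]
    rintro _ ⟨a, ha, b, hb, rfl⟩
    exact add_mem (hp ha) (hq hb)

theorem MvPolynomial.mem_closure_of_monomial_mem_adjoin {σ R : Type*} [CommSemiring R]
    [Nontrivial R]
    {s : Set (σ →₀ ℕ)} {d : σ →₀ ℕ}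
    (hd : monomial d (1 : R) ∈ Algebra.adjoin R ((monomial · (1 : R)) '' s)) :
    d ∈ AddSubmonoid.closure s :=
  support_subset_closure_of_mem_adjoin_monomial hd (by classical simp [coeff_monomial])

namespace MonomialOrder

variable {σ K : Type*} [Field K] (m : MonomialOrder σ) (i : σ)

theorem degree_X_pow_mul (a : ℕ) {q : MvPolynomial σ K} (hq : q ≠ 0) :
    m.degree (X i ^ a * q) = Finsupp.single i a + m.degree q := by
  rw [m.degree_mul (pow_ne_zero a (X_ne_zero i)) hq, m.degree_pow, m.degree_X, Finsupp.smul_single,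
    smul_eq_mul, mul_one]

variable {m i} {A : Subalgebra K (MvPolynomial σ K)}

theorem exists_degree_X_pow_mul_eq_of_mem_closure {B : Set (MvPolynomial σ K)}
    (hBA : B ⊆ A) (hBi : ∀ b ∈ B, b ≠ X i → m.degree b i = 0) {d : σ →₀ ℕ}
    (hd : d ∈ AddSubmonoid.closure (m.degree '' (B \ {0}))) :
    ∃ q ∈ A, q ≠ 0 ∧ m.degree (X i ^ d i * q) = d := by
  induction hd using AddSubmonoid.closure_induction with
  | mem d hd =>
    obtain ⟨b, ⟨hb, hb0⟩, rfl⟩ := hd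
    by_cases hbX : b = X i
    · subst hbX
      refine ⟨1, one_mem A, one_ne_zero, ?_⟩
      rw [m.degree_X, Finsupp.single_eq_same, pow_one, mul_one, m.degree_X]
    · exact ⟨b, hBA hb, hb0, by rw [hBi b hb hbX, pow_zero, one_mul]⟩
  | zero => exact ⟨1, one_mem A, one_ne_zero, by simp⟩
  | add d₁ d₂ _ _ h₁ h₂ =>
    obtain ⟨q₁, hq₁A, hq₁, hd₁⟩ := h₁
    obtain ⟨q₂, hq₂A, hq₂, hd₂⟩ := h₂
    refine ⟨q₁ * q₂, mul_mem hq₁A hq₂A, mul_ne_zero hq₁ hq₂, ?_⟩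
    have hfactor : X i ^ (d₁ + d₂) i * (q₁ * q₂) = (X i ^ d₁ i * q₁) * (X i ^ d₂ i * q₂) := by
      rw [Finsupp.add_apply, pow_add]; ring
    rw [hfactor, m.degree_mul (mul_ne_zero (pow_ne_zero _ (X_ne_zero i)) hq₁)
      (mul_ne_zero (pow_ne_zero _ (X_ne_zero i)) hq₂), hd₁, hd₂]

theorem exists_sub_mem_and_degree_lt (hXA : X i ∈ A) {k : ℕ} (hk : 0 < k)
    {f : MvPolynomial σ K} (hf : X i ^ k * f ∈ A) (hf0 : f ≠ 0)
    {q : MvPolynomial σ K} (hqA : q ∈ A) (hq0 : q ≠ 0)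
    (hq : m.degree (X i ^ m.degree (X i ^ k * f) i * q) = m.degree (X i ^ k * f)) :
    ∃ g, f - g ∈ A ∧ X i ^ k * g ∈ A ∧ m.degree (X i ^ k * g) ≺[m] m.degree (X i ^ k * f) := by
  set D := m.degree (X i ^ k * f)
  have hkD : k ≤ D i := by simp [D, m.degree_X_pow_mul i k hf0]
  have hunit : IsUnit (m.leadingCoeff (X i ^ D i * q)) :=
    (m.leadingCoeff_ne_zero_iff.mpr (mul_ne_zero (pow_ne_zero _ (X_ne_zero i)) hq0)).isUnit
  set c : K := ↑hunit.unit⁻¹ * m.leadingCoeff (X i ^ k * f)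
  have hcq : C c * X i ^ (D i - k) * q ∈ A :=
    mul_mem (mul_mem (A.algebraMap_mem c) (pow_mem hXA _)) hqA
  have hreduce : m.reduce hunit (X i ^ k * f) = X i ^ k * (f - C c * X i ^ (D i - k) * q) := by
    have hsplit : (X i : MvPolynomial σ K) ^ D i = X i ^ k * X i ^ (D i - k) := by
      rw [← pow_add, Nat.add_sub_cancel' hkD]
    rw [reduce, hq, tsub_self, monomial_zero']
    simp only [hsplit, c]
    ring
  refine ⟨f - C c * X i ^ (D i - k) * q, by simpa using hcq, ?_, ?_⟩
  · rw [mul_sub]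
    exact sub_mem hf (mul_mem (pow_mem hXA k) hcq)
  · rw [← hreduce]
    refine m.degree_reduce_lt hunit hq.le fun hD0 => ?_
    rw [show D = 0 from hD0, Finsupp.zero_apply] at hkD
    omega

theorem mem_of_X_pow_mul_mem (hXA : X i ∈ A)
    (hdeg : ∀ h ∈ A, h ≠ 0 → ∃ q ∈ A, q ≠ 0 ∧ m.degree (X i ^ m.degree h i * q) = m.degree h)
    {k : ℕ} {f : MvPolynomial σ K} (hf : X i ^ k * f ∈ A) : f ∈ A := by
  obtain ⟨D, hD⟩ : ∃ D, m.toSyn (m.degree (X i ^ k * f)) = D := ⟨_, rfl⟩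
  induction D using WellFoundedLT.induction generalizing f with
  | ind D ih =>
    rcases eq_or_ne f 0 with rfl | hf0
    · exact zero_mem A
    rcases Nat.eq_zero_or_pos k with rfl | hk
    · simpa using hf
    obtain ⟨q, hqA, hq0, hq⟩ := hdeg _ hf (mul_ne_zero (pow_ne_zero k (X_ne_zero i)) hf0)
    obtain ⟨g, hfg, hg, hlt⟩ := exists_sub_mem_and_degree_lt hXA hk hf hf0 hqA hq0 hq
    simpa using add_mem hfg (ih _ (hD ▸ hlt) hg rfl)

end MonomialOrder

theorem isLeadMonomial_iff {k : Type*} [CommSemiring k] {f : MvPolynomial (Fin (n + 1)) k}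
    {d : Fin (n + 1) →₀ ℕ} :
    IsLeadMonomial f d ↔ f ≠ 0 ∧ MonomialOrder.grevlex.degree f = d := by
  constructor
  · rintro ⟨hd, hlt⟩
    have hf : f ≠ 0 := by rintro rfl; simp at hd
    refine ⟨hf, by_contra fun hne => ?_⟩
    exact (MonomialOrder.grevlex_lt_iff.mpr
      (hlt _ (MonomialOrder.degree_mem_support hf) hne)).not_ge (MonomialOrder.le_degree hd)
  · rintro ⟨hf, rfl⟩
    exact ⟨MonomialOrder.degree_mem_support hf, fun e he hne => MonomialOrder.grevlex_lt_iff.mp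
      (lt_of_le_of_ne (MonomialOrder.le_degree he) (MonomialOrder.grevlex.toSyn.injective.ne hne))⟩

theorem setOf_monomial_isLeadMonomial {k : Type*} [CommSemiring k]
    (B : Set (MvPolynomial (Fin (n + 1)) k)) :
    {m : MvPolynomial (Fin (n + 1)) k | ∃ b ∈ B, ∃ e, IsLeadMonomial b e ∧ m = monomial e 1} =
      (monomial · 1) '' (MonomialOrder.grevlex.degree '' (B \ {0})) := by
  ext
  simp only [isLeadMonomial_iff, Set.mem_ofPred_eq, Set.mem_image, Set.mem_sdiff,
    Set.mem_singleton_iff]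
  grind

theorem genthm_general {k : Type*} [Field k]
    {G : Type*} [Group G]
    (ρ : G →* (MvPolynomial (Fin (n + 1)) k ≃ₐ[k] MvPolynomial (Fin (n + 1)) k))
    (A : Subalgebra k (MvPolynomial (Fin (n + 1)) k)) (B : Set (MvPolynomial (Fin (n + 1)) k))
    (hgen : Algebra.adjoin k B = A)
    (hxB : (X 0 : MvPolynomial (Fin (n + 1)) k) ∈ B)
    -- `A ⊆ k[V]^G`:
    (hAinv : ∀ f ∈ A, ∀ g : G, ρ g f = f)
    -- `A[x⁻¹] = k[V]^G[x⁻¹]`: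
    (hloc : ∀ f : MvPolynomial (Fin (n + 1)) k, (∀ g : G, ρ g f = f) → ∃ m : ℕ, X 0 ^ m * f ∈ A)
    -- the lead monomials of elements of `B` other than `x` lie in `k[y₁,…,y_{n−1}]`:
    (hBlead : ∀ f ∈ B, f ≠ X 0 → ∀ d, IsLeadMonomial f d → d 0 = 0)
    -- `B` is a SAGBI basis of `A`: the lead monomials of `B` generate the lead term
    -- algebra of `A`:
    (hSAGBI : ∀ f ∈ A, ∀ d, IsLeadMonomial f d →
      (monomial d (1 : k)) ∈ Algebra.adjoin k
        {m : MvPolynomial (Fin (n + 1)) k |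
          ∃ b ∈ B, ∃ e, IsLeadMonomial b e ∧ m = monomial e (1 : k)}) :
    ∀ f : MvPolynomial (Fin (n + 1)) k, (∀ g : G, ρ g f = f) ↔ f ∈ A := by
  have hBA : B ⊆ A := hgen ▸ Algebra.subset_adjoin
  have hBx : ∀ b ∈ B, b ≠ X 0 → MonomialOrder.grevlex.degree b 0 = 0 := by
    intro b hb hbx
    rcases eq_or_ne b 0 with rfl | hb0
    · simp
    · exact hBlead b hb hbx _ (isLeadMonomial_iff.mpr ⟨hb0, rfl⟩)
  have hlead : ∀ h ∈ A, h ≠ 0 → MonomialOrder.grevlex.degree h ∈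
      AddSubmonoid.closure (MonomialOrder.grevlex.degree '' (B \ {0})) := fun h hh h0 =>
    mem_closure_of_monomial_mem_adjoin
      (setOf_monomial_isLeadMonomial B ▸ hSAGBI h hh _ (isLeadMonomial_iff.mpr ⟨h0, rfl⟩))
  intro f
  refine ⟨fun hf => ?_, fun hf g => hAinv f hf g⟩
  obtain ⟨m, hm⟩ := hloc f hf
  exact MonomialOrder.mem_of_X_pow_mul_mem (hBA hxB) (fun h hh h0 =>
    MonomialOrder.exists_degree_X_pow_mul_eq_of_mem_closure hBA hBx (hlead h hh h0)) hm

/-- Theorem 2.1 (genthm): let `G` be a `p`-group acting on `k[x, y₁, …, y_{n−1}]`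
(char `k = p`) by unipotent upper-triangular linear substitutions fixing `x = X 0`.
If `A ⊆ k[V]^G` is a subalgebra, generated by a set `B` of homogeneous invariants
containing `x`, such that `A[x⁻¹] = k[V]^G[x⁻¹]`, `k[V]^G` is integral over `A`,
`B` is a SAGBI basis of `A` (for grevlex with `x` smallest), and the lead monomials of
the elements of `B` other than `x` involve only `y₁, …, y_{n−1}`, then `A = k[V]^G`. -/
theorem genthm {p : ℕ} [Fact p.Prime] {k : Type*} [Field k] [CharP k p]
    {G : Type*} [Group G] [Finite G] (hpG : ∃ m : ℕ, Nat.card G = p ^ m)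
    (ρ : G →* (MvPolynomial (Fin (n + 1)) k ≃ₐ[k] MvPolynomial (Fin (n + 1)) k))
    (hx : ∀ g : G, ρ g (X 0) = X 0)
    (htri : ∀ (g : G) (i : Fin (n + 1)),
      ρ g (X i) ∈ Submodule.span k ((fun j : Fin (n + 1) => (X j : MvPolynomial (Fin (n + 1)) k)) ''
        {j | j = 0 ∨ j ≤ i}))
    (A : Subalgebra k (MvPolynomial (Fin (n + 1)) k)) (B : Set (MvPolynomial (Fin (n + 1)) k))
    (hgen : Algebra.adjoin k B = A)
    (hxB : (X 0 : MvPolynomial (Fin (n + 1)) k) ∈ B)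
    (hBhom : ∀ f ∈ B, ∃ d : ℕ, f.IsHomogeneous d)
    -- `A ⊆ k[V]^G`:
    (hAinv : ∀ f ∈ A, ∀ g : G, ρ g f = f)
    -- `A[x⁻¹] = k[V]^G[x⁻¹]`:
    (hloc : ∀ f : MvPolynomial (Fin (n + 1)) k, (∀ g : G, ρ g f = f) → ∃ m : ℕ, X 0 ^ m * f ∈ A)
    -- `k[V]^G` is integral over `A`:
    (hint : ∀ f : MvPolynomial (Fin (n + 1)) k, (∀ g : G, ρ g f = f) → IsIntegral A f)
    -- the lead monomials of elements of `B` other than `x` lie in `k[y₁,…,y_{n−1}]`: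
    (hBlead : ∀ f ∈ B, f ≠ X 0 → ∀ d, IsLeadMonomial f d → d 0 = 0)
    -- `B` is a SAGBI basis of `A`: the lead monomials of `B` generate the lead term
    -- algebra of `A`:
    (hSAGBI : ∀ f ∈ A, ∀ d, IsLeadMonomial f d →
      (monomial d (1 : k)) ∈ Algebra.adjoin k
        {m : MvPolynomial (Fin (n + 1)) k |
          ∃ b ∈ B, ∃ e, IsLeadMonomial b e ∧ m = monomial e (1 : k)}) :
    ∀ f : MvPolynomial (Fin (n + 1)) k, (∀ g : G, ρ g f = f) ↔ f ∈ A :=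
  genthm_general ρ A B hgen hxB hAinv hloc hBlead hSAGBI
end

section
/- Let k be a field of characteristic p and G a finite p-group acting faithfully and linearly on a finite-dimensional k-vector space V. Then the ring of invariants k[V]^G is a unique factorization domain. -/
open MvPolynomial

/-- The subalgebra of elements fixed by a group acting through algebra automorphisms. -/
def fixedSubalgebra {k R G : Type*} [CommSemiring k] [CommSemiring R] [Algebra k R]
    [Group G] (ρ : G →* (R ≃ₐ[k] R)) : Subalgebra k R where
  carrier := {f | ∀ g : G, ρ g f = f}
  mul_mem' := by intro a b ha hb g; rw [map_mul, ha g, hb g]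
  add_mem' := by intro a b ha hb g; rw [map_add, ha g, hb g]
  algebraMap_mem' := by intro c g; exact (ρ g).commutes c

/-!
Let `q` be a prime of `k[V]` dividing a nonzero invariant `a`, and let `F` be the product of the
distinct associate classes of the conjugates `g • q`. Each `g` permutes these classes, so
`g • F = χ(g) F` with `χ(g)` a unit of `k[V]`, i.e. a nonzero scalar; as `G` is a `p`-group and
`k` has characteristic `p`, `χ(g) ^ p ^ m = 1` forces `χ(g) = 1`, so `F` is invariant. An invariant
divisible by `q` is divisible by every `g • q`, hence by `F`, and the quotient is again invariant;
so `F` is a prime of `k[V]^G` dividing `a`. Hence every irreducible invariant is prime, and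
divisibility in `k[V]^G` is well founded because it is in `k[V]`.
-/

section AssociatesCongr

variable {M N : Type*} [CommMonoid M] [CommMonoid N] (e : M ≃* N)

def MulEquiv.associatesCongr : Associates M ≃* Associates N where
  toFun := Quotient.map e fun _ _ h => h.map e
  invFun := Quotient.map e.symm fun _ _ h => h.map e.symm
  left_inv := by rintro ⟨x⟩; exact congrArg Associates.mk (e.symm_apply_apply x)
  right_inv := by rintro ⟨x⟩; exact congrArg Associates.mk (e.apply_symm_apply x)
  map_mul' := by rintro ⟨x⟩ ⟨y⟩; exact congrArg Associates.mk (map_mul e x y)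

@[simp]
theorem MulEquiv.associatesCongr_mk (x : M) :
    e.associatesCongr (Associates.mk x) = Associates.mk (e x) :=
  rfl

end AssociatesCongr

theorem MvPolynomial.mem_fixedSubalgebra_of_forall_associated {σ k G : Type*} [CommRing k]
    [IsDomain k] {p : ℕ} [ExpChar k p] [Group G] (hG : IsPGroup p G)
    (ρ : G →* (MvPolynomial σ k ≃ₐ[k] MvPolynomial σ k)) {F : MvPolynomial σ k} (hF : F ≠ 0)
    (hFρ : ∀ g, Associated (ρ g F) F) : F ∈ fixedSubalgebra ρ := by
  intro g
  obtain ⟨u, hu⟩ := (hFρ g).symm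
  obtain ⟨c, -, hc⟩ := isUnit_iff_eq_C_of_isReduced.1 u.isUnit
  have hpow : ∀ N : ℕ, ρ (g ^ N) F = F * C (c ^ N) := by
    intro N
    induction N with
    | zero => simp
    | succ N ih =>
      rw [pow_succ, map_mul, AlgEquiv.mul_apply, ← hu, hc, map_mul, ih, ← algebraMap_eq,
        AlgEquiv.commutes, algebraMap_eq, mul_assoc, ← C_mul, pow_succ]
  obtain ⟨m, hm⟩ := hG g
  have hcm : c ^ p ^ m = 1 := by
    have := hpow (p ^ m)
    rw [hm, map_one, AlgEquiv.one_apply] at this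
    exact C_injective σ k (by simpa using mul_left_cancel₀ hF (this.symm.trans (mul_one F).symm))
  have hc1 : c = 1 := by
    simpa using (ExpChar.pow_prime_pow_mul_eq_one_iff p m 1 c).1 (by simpa using hcm)
  rw [← hu, hc, hc1, C_1, mul_one]

section FixedSubalgebra

variable {k R G : Type*} [CommSemiring k] [CommRing R] [IsDomain R] [Algebra k R] [Group G]
  (ρ : G →* (R ≃ₐ[k] R))

theorem mem_fixedSubalgebra_of_mul_mem {a c : R} (ha : a ∈ fixedSubalgebra ρ) (ha0 : a ≠ 0)
    (hac : a * c ∈ fixedSubalgebra ρ) : c ∈ fixedSubalgebra ρ := by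
  intro g
  apply mul_left_cancel₀ ha0
  nth_rw 1 [← ha g]
  rw [← map_mul, hac g]

theorem fixedSubalgebra_dvd_iff {a b : fixedSubalgebra ρ} (ha : (a : R) ≠ 0) :
    a ∣ b ↔ (a : R) ∣ b := by
  refine ⟨map_dvd (fixedSubalgebra ρ).val, ?_⟩
  rintro ⟨c, hc⟩
  exact ⟨⟨c, mem_fixedSubalgebra_of_mul_mem ρ a.2 ha (hc ▸ b.2)⟩, Subtype.ext hc⟩

theorem fixedSubalgebra_isUnit_iff {a : fixedSubalgebra ρ} : IsUnit a ↔ IsUnit (a : R) := by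
  refine ⟨IsUnit.map (fixedSubalgebra ρ).val, fun h => ?_⟩
  rw [isUnit_iff_dvd_one, fixedSubalgebra_dvd_iff ρ h.ne_zero]
  exact isUnit_iff_dvd_one.1 h

theorem wfDvdMonoid_fixedSubalgebra [WfDvdMonoid R] : WfDvdMonoid (fixedSubalgebra ρ) := by
  refine ⟨Subrelation.wf ?_ (InvImage.wf Subtype.val wellFounded_dvdNotUnit)⟩
  rintro a b ⟨ha, c, hc, rfl⟩
  exact ⟨fun h => ha (Subtype.ext h), c, (fixedSubalgebra_isUnit_iff ρ).not.1 hc, rfl⟩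

end FixedSubalgebra

section Orbit

variable {k R G : Type*} [CommSemiring k] [CommRing R] [Algebra k R] [Group G]
  [Fintype G] (ρ : G →* (R ≃ₐ[k] R))

open Classical

noncomputable def associatesOrbit (q : R) : Finset (Associates R) :=
  Finset.univ.image fun g => Associates.mk (ρ g q)

noncomputable def associatesOrbitProd (q : R) : Associates R :=
  ∏ s ∈ associatesOrbit ρ q, s

theorem image_associatesCongr_associatesOrbit (h : G) (q : R) :
    (associatesOrbit ρ q).image (ρ h : R ≃* R).associatesCongr = associatesOrbit ρ q := by
  have hmk : ∀ g, (ρ h : R ≃* R).associatesCongr (Associates.mk (ρ g q)) =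
      Associates.mk (ρ (h * g) q) := fun g => by
    rw [MulEquiv.associatesCongr_mk, map_mul, AlgEquiv.mul_apply]; rfl
  ext s
  simp only [associatesOrbit, Finset.image_image, Finset.mem_image, Finset.mem_univ, true_and,
    Function.comp_apply, hmk]
  exact ((Equiv.mulLeft h).surjective.exists (p := fun g => Associates.mk (ρ g q) = s)).symm

theorem associatesCongr_associatesOrbitProd (h : G) (q : R) :
    (ρ h : R ≃* R).associatesCongr (associatesOrbitProd ρ q) = associatesOrbitProd ρ q := by
  rw [associatesOrbitProd, map_prod,
    ← Finset.prod_image (f := fun s => s) (MulEquiv.injective _).injOn,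
    image_associatesCongr_associatesOrbit]

theorem mk_dvd_associatesOrbitProd (q : R) : Associates.mk q ∣ associatesOrbitProd ρ q :=
  Finset.dvd_prod_of_mem _ (Finset.mem_image.2 ⟨1, Finset.mem_univ _, by simp⟩)

theorem associatesOrbitProd_dvd_mk [IsDomain R] {q x : R} (hq : Prime q)
    (hx : x ∈ fixedSubalgebra ρ) (hqx : q ∣ x) : associatesOrbitProd ρ q ∣ Associates.mk x := by
  refine Finset.prod_primes_dvd _ ?_ ?_ <;>
    simp only [associatesOrbit, Finset.mem_image, Finset.mem_univ, true_and, forall_exists_index,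
      forall_apply_eq_imp_iff]
  · exact fun g => Associates.prime_mk.2 ((MulEquiv.prime_iff (ρ g)).2 hq)
  · exact fun g => Associates.mk_dvd_mk.2 (hx g ▸ map_dvd (ρ g) hqx)

end Orbit

section UniqueFactorization

variable {k R G : Type*} [CommSemiring k] [CommRing R] [IsDomain R] [Algebra k R] [Group G]
  (ρ : G →* (R ≃ₐ[k] R))

theorem exists_prime_dvd_of_prime_dvd_coe [Fintype G]
    (hρ : ∀ F : R, F ≠ 0 → (∀ g, Associated (ρ g F) F) → F ∈ fixedSubalgebra ρ)
    {a : fixedSubalgebra ρ} (ha : (a : R) ≠ 0) {q : R} (hq : Prime q) (hqa : q ∣ a) :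
    ∃ F : fixedSubalgebra ρ, Prime F ∧ F ∣ a := by
  obtain ⟨F, hF⟩ := Associates.mk_surjective (associatesOrbitProd ρ q)
  have hqF : q ∣ F := Associates.mk_dvd_mk.1 (hF ▸ mk_dvd_associatesOrbitProd ρ q)
  have hFa : F ∣ a := Associates.mk_dvd_mk.1 (hF ▸ associatesOrbitProd_dvd_mk ρ hq a.2 hqa)
  have hF0 : F ≠ 0 := ne_zero_of_dvd_ne_zero ha hFa
  have hFfix : F ∈ fixedSubalgebra ρ := hρ F hF0 fun g => Associates.mk_eq_mk_iff_associated.1 <|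
    (congrArg (ρ g : R ≃* R).associatesCongr hF).trans
      ((associatesCongr_associatesOrbitProd ρ g q).trans hF.symm)
  have hFdvd : ∀ x : fixedSubalgebra ρ, q ∣ x → (⟨F, hFfix⟩ : fixedSubalgebra ρ) ∣ x :=
    fun x hqx => (fixedSubalgebra_dvd_iff ρ hF0).2 <|
      Associates.mk_dvd_mk.1 (hF ▸ associatesOrbitProd_dvd_mk ρ hq x.2 hqx)
  refine ⟨⟨F, hFfix⟩, ⟨fun h => hF0 (congrArg Subtype.val h), fun h => ?_, fun x y hxy => ?_⟩,
    hFdvd a hqa⟩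
  · exact hq.not_isUnit (isUnit_of_dvd_unit hqF ((fixedSubalgebra_isUnit_iff ρ).1 h))
  · exact (hq.dvd_or_dvd (hqF.trans (map_dvd (fixedSubalgebra ρ).val hxy))).imp (hFdvd x) (hFdvd y)

theorem uniqueFactorizationMonoid_fixedSubalgebra [Finite G] [UniqueFactorizationMonoid R]
    (hρ : ∀ F : R, F ≠ 0 → (∀ g, Associated (ρ g F) F) → F ∈ fixedSubalgebra ρ) :
    UniqueFactorizationMonoid (fixedSubalgebra ρ) where
  toIsWellFounded := wfDvdMonoid_fixedSubalgebra ρ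
  irreducible_iff_prime {a} := by
    refine ⟨fun ha => ?_, Prime.irreducible⟩
    have := Fintype.ofFinite G
    have ha0 : (a : R) ≠ 0 := fun h => ha.ne_zero (Subtype.ext h)
    obtain ⟨q, hq, hqa⟩ := WfDvdMonoid.exists_irreducible_factor
      ((fixedSubalgebra_isUnit_iff ρ).not.1 ha.not_isUnit) ha0
    obtain ⟨F, hF, b, rfl⟩ := exists_prime_dvd_of_prime_dvd_coe ρ hρ ha0
      (UniqueFactorizationMonoid.irreducible_iff_prime.1 hq) hqa
    have hb : IsUnit b := (ha.isUnit_or_isUnit rfl).resolve_left hF.not_isUnit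
    exact (associated_mul_unit_right F b hb).prime hF

end UniqueFactorization

theorem invariants_p_group_UFD_general {p : ℕ} [Fact p.Prime] {k : Type*} [Field k] [CharP k p]
    {G : Type*} [Group G] [Finite G] (hpG : ∃ m : ℕ, Nat.card G = p ^ m)
    (n : ℕ) (ρ : G →* (MvPolynomial (Fin n) k ≃ₐ[k] MvPolynomial (Fin n) k)) :
    UniqueFactorizationMonoid (fixedSubalgebra ρ) := by
  obtain ⟨m, hm⟩ := hpG
  exact uniqueFactorizationMonoid_fixedSubalgebra ρ fun _ hF =>
    mem_fixedSubalgebra_of_forall_associated (IsPGroup.of_card hm) ρ hF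

/-- The ring of invariants of a faithful linear action of a finite `p`-group on a polynomial
ring over a field of characteristic `p` is a unique factorization domain. -/
theorem invariants_p_group_UFD {p : ℕ} [Fact p.Prime] {k : Type*} [Field k] [CharP k p]
    {G : Type*} [Group G] [Finite G] (hpG : ∃ m : ℕ, Nat.card G = p ^ m)
    (n : ℕ) (ρ : G →* (MvPolynomial (Fin n) k ≃ₐ[k] MvPolynomial (Fin n) k))
    (hlin : ∀ (g : G) (i : Fin n),
      ρ g (X i) ∈ Submodule.span k (Set.range (X : Fin n → MvPolynomial (Fin n) k)))
    (hfaithful : Function.Injective ρ) :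
    UniqueFactorizationMonoid (fixedSubalgebra ρ) :=
  invariants_p_group_UFD_general hpG n ρ
end
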